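/- Let {X_n} be i.i.d. random variables, 0 < λ < ∞, and β₁ = sup{r ≥ 0 : lim_{x→∞} e^{r x^{1/λ}} P(X > x) = 0}. Then limsup_{n→∞} (max_{1≤k≤n} X_k)/(log n)^λ = β₁^{−λ} almost surely, with conventions 0^{−λ} = ∞ and ∞^{−λ} = 0. -/

import Mathlib

open MeasureTheory ProbabilityTheory Filter
open scoped ENNReal

/-- `log x = ln (e ∨ x)` as in the paper. -/
noncomputable def Log (x : ℝ) : ℝ := Real.log (max (Real.exp 1) x)

/-- `pmax X n ω = max_{1 ≤ k ≤ n} X_k(ω)` (indexed `0,…,n-1`), junk value at `n = 0`. -/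
noncomputable def pmax {Ω : Type*} (X : ℕ → Ω → ℝ) (n : ℕ) (ω : Ω) : ℝ :=
  if h : n = 0 then X 0 ω
  else (Finset.range n).sup' (Finset.nonempty_range_iff.mpr h) fun k => X k ω

/-!
Let `P(x) = ℙ(X > x)` and, for `r ≥ 0` and `c > 0`, put `θ = r c^{1/λ}`; the substitution
`x = c t^λ` turns `e^{r x^{1/λ}} P(x)` into `e^{θ t} P(c t^λ)`.

If `e^{r x^{1/λ}} P(x) → 0` and `θ > 1`, then `P(X_n > c (log n)^λ) ≤ n^{-θ}` eventually, so by the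
first Borel–Cantelli lemma `X_n ≤ c (log n)^λ` eventually, almost surely, and the limsup is `≤ c`.

If it does not tend to `0` and `θ < 1`, then `P(c t^λ) ≥ ε e^{-θ t}` for arbitrarily large `t`;
for such `t` the first `⌊e^t⌋` terms of `∑ P(X_n > c (log (n+1))^λ)` add up to at least
`ε e^{(1-θ) t} / 2`, so the series diverges, and by the second Borel–Cantelli lemma
`X_n > c (log (n+1))^λ` infinitely often, almost surely: the limsup is `≥ c`.

By the definition of `β₁`, the first case applies to every `c > β₁^{-λ}` and the second to every
`c < β₁^{-λ}`; countably many such `c` suffice.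
-/

section Log

lemma one_le_Log (x : ℝ) : 1 ≤ Log x := by
  simpa [Log] using Real.log_le_log (Real.exp_pos 1) (le_max_left (Real.exp 1) x)

lemma Log_pos (x : ℝ) : 0 < Log x :=
  one_pos.trans_le (one_le_Log x)

lemma Log_mono : Monotone Log := fun _ _ hxy =>
  Real.log_le_log ((Real.exp_pos 1).trans_le (le_max_left _ _)) (max_le_max le_rfl hxy)

lemma Log_of_exp_one_le {x : ℝ} (hx : Real.exp 1 ≤ x) : Log x = Real.log x := by
  rw [Log, max_eq_right hx]

lemma Log_le_of_le_exp {x t : ℝ} (ht : 1 ≤ t) (hx : x ≤ Real.exp t) : Log x ≤ t := by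
  simpa [Log] using Real.log_le_log ((Real.exp_pos 1).trans_le (le_max_left _ _))
    (max_le (Real.exp_le_exp.2 ht) hx)

lemma tendsto_Log_natCast_atTop : Tendsto (fun n : ℕ => Log n) atTop atTop := by
  refine (Real.tendsto_log_atTop.comp tendsto_natCast_atTop_atTop).congr' ?_
  filter_upwards [tendsto_natCast_atTop_atTop.eventually_ge_atTop (Real.exp 1)] with n hn
  exact (Log_of_exp_one_le hn).symm

lemma monotone_Log_natCast_rpow {lam : ℝ} (hlam : 0 ≤ lam) :
    Monotone fun n : ℕ => Log n ^ lam := fun _ _ hmn =>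
  Real.rpow_le_rpow (Log_pos _).le (Log_mono (Nat.cast_le.2 hmn)) hlam

end Log

section RunningMax

variable {Ω : Type*} (X : ℕ → Ω → ℝ) (ω : Ω)

lemma le_pmax {k n : ℕ} (h : k < n) : X k ω ≤ pmax X n ω := by
  rw [pmax, dif_neg (by omega)]
  exact Finset.le_sup' (fun k => X k ω) (Finset.mem_range.2 h)

lemma pmax_le {n : ℕ} (hn : n ≠ 0) {b : ℝ} (h : ∀ k < n, X k ω ≤ b) : pmax X n ω ≤ b := by
  rw [pmax, dif_neg hn]
  exact Finset.sup'_le _ _ fun k hk => h k (Finset.mem_range.1 hk)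

lemma limsup_pmax_div_le {a : ℕ → ℝ} (ha : Monotone a) (ha_pos : ∀ n, 0 < a n)
    (ha_top : Tendsto a atTop atTop) {c : ℝ} (hc : 0 < c) (h : ∀ᶠ n in atTop, X n ω ≤ c * a n) :
    limsup (fun n => ENNReal.ofReal (pmax X n ω / a n)) atTop ≤ ENNReal.ofReal c := by
  obtain ⟨N, hN⟩ := eventually_atTop.1 h
  have hbound : ∀ᶠ n in atTop, pmax X N ω ≤ c * a n :=
    (ha_top.const_mul_atTop hc).eventually_ge_atTop _
  refine limsup_le_of_le (by isBoundedDefault) ?_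
  filter_upwards [hbound, eventually_ge_atTop N, eventually_ge_atTop 1] with n hb hNn hn
  refine ENNReal.ofReal_le_ofReal ((div_le_iff₀ (ha_pos n)).2 (pmax_le X ω (by omega) ?_))
  intro k hk
  rcases lt_or_ge k N with hkN | hkN
  · exact (le_pmax X ω hkN).trans hb
  · exact (hN k hkN).trans (mul_le_mul_of_nonneg_left (ha hk.le) hc.le)

lemma le_limsup_pmax_div {a : ℕ → ℝ} (ha_pos : ∀ n, 0 < a n) {c : ℝ}
    (h : ∃ᶠ n in atTop, c * a (n + 1) < X n ω) :
    ENNReal.ofReal c ≤ limsup (fun n => ENNReal.ofReal (pmax X n ω / a n)) atTop := by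
  refine le_limsup_of_frequently_le' ((tendsto_add_atTop_nat 1).frequently (h.mono fun n hn => ?_))
  refine ENNReal.ofReal_le_ofReal ((le_div_iff₀ (ha_pos _)).2 ?_)
  exact hn.le.trans (le_pmax X ω n.lt_succ_self)

end RunningMax

section Tail

variable {P : ℝ → ℝ} {lam c r : ℝ}

lemma mul_rpow_rpow_one_div (hc : 0 ≤ c) (hlam : lam ≠ 0) {t : ℝ} (ht : 0 ≤ t) :
    (c * t ^ lam) ^ (1 / lam) = c ^ (1 / lam) * t := by
  rw [Real.mul_rpow hc (Real.rpow_nonneg ht _), one_div, Real.rpow_rpow_inv ht hlam]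

lemma one_lt_mul_rpow_iff (hc : 0 < c) :
    1 < r * c ^ (1 / lam) ↔ c ^ (-(1 / lam)) < r := by
  rw [Real.rpow_neg hc.le, inv_lt_iff_one_lt_mul₀ (Real.rpow_pos_of_pos hc _)]

lemma mul_rpow_lt_one_iff (hc : 0 < c) :
    r * c ^ (1 / lam) < 1 ↔ r < c ^ (-(1 / lam)) := by
  rw [← not_le, ← not_le, Real.rpow_neg hc.le, inv_le_iff_one_le_mul₀ (Real.rpow_pos_of_pos hc _)]

lemma eventually_le_exp_of_tendsto (hlam : 0 < lam) (hc : 0 < c)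
    (hP : Tendsto (fun x => Real.exp (r * x ^ (1 / lam)) * P x) atTop (nhds 0)) :
    ∀ᶠ t in atTop, P (c * t ^ lam) ≤ Real.exp (-(r * c ^ (1 / lam) * t)) := by
  have hsmall := hP.eventually (eventually_lt_nhds one_pos)
  have hsubst : Tendsto (fun t => c * t ^ lam) atTop atTop :=
    (tendsto_rpow_atTop hlam).const_mul_atTop hc
  filter_upwards [hsubst.eventually hsmall, eventually_ge_atTop 0] with t hlt ht
  rw [mul_rpow_rpow_one_div hc.le hlam.ne' ht, ← mul_assoc] at hlt
  calc P (c * t ^ lam)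
      = Real.exp (-(r * c ^ (1 / lam) * t)) *
          (Real.exp (r * c ^ (1 / lam) * t) * P (c * t ^ lam)) := by
        rw [← mul_assoc, ← Real.exp_add, neg_add_cancel, Real.exp_zero, one_mul]
    _ ≤ Real.exp (-(r * c ^ (1 / lam) * t)) := by
        simpa using mul_le_mul_of_nonneg_left hlt.le (Real.exp_pos _).le

lemma frequently_exp_le_of_not_tendsto (hlam : 0 < lam) (hc : 0 < c) (hP0 : ∀ x, 0 ≤ P x)
    (hP : ¬ Tendsto (fun x => Real.exp (r * x ^ (1 / lam)) * P x) atTop (nhds 0)) :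
    ∃ ε > 0, ∃ᶠ t in atTop, ε * Real.exp (-(r * c ^ (1 / lam) * t)) ≤ P (c * t ^ lam) := by
  obtain ⟨s, hs, hfreq⟩ := not_tendsto_iff_exists_frequently_notMem.1 hP
  obtain ⟨ε, hε, hball⟩ := Metric.mem_nhds_iff.1 hs
  refine ⟨ε, hε, ?_⟩
  -- transport back along the inverse substitution `t = (x / c)^{1/λ}`
  have hsubst : Tendsto (fun x => (x / c) ^ (1 / lam)) atTop atTop :=
    (tendsto_rpow_atTop (by positivity)).comp (tendsto_id.atTop_div_const hc)
  refine hsubst.frequently ((hfreq.and_eventually (eventually_gt_atTop 0)).mono ?_)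
  rintro x ⟨hx, hx0⟩
  have hxc : 0 ≤ x / c := by positivity
  have hx_eq : c * ((x / c) ^ (1 / lam)) ^ lam = x := by
    rw [one_div, Real.rpow_inv_rpow hxc hlam.ne', mul_div_cancel₀ _ hc.ne']
  have hε_le : ε ≤ Real.exp (r * c ^ (1 / lam) * (x / c) ^ (1 / lam)) * P x := by
    have := mt (@hball _) hx
    rw [Metric.mem_ball, Real.dist_0_eq_abs, not_lt,
      abs_of_nonneg (mul_nonneg (Real.exp_pos _).le (hP0 x))] at this
    rwa [mul_assoc, ← Real.mul_rpow hc.le hxc, mul_div_cancel₀ _ hc.ne']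
  rw [hx_eq, Real.exp_neg, ← div_eq_mul_inv, div_le_iff₀ (Real.exp_pos _), mul_comm]
  exact hε_le

end Tail

section Series

variable {h : ℝ → ℝ} {θ : ℝ}

lemma summable_comp_Log_of_eventually_le_exp (h0 : ∀ t, 0 ≤ h t) (hθ : 1 < θ)
    (hle : ∀ᶠ t in atTop, h t ≤ Real.exp (-(θ * t))) : Summable fun n : ℕ => h (Log n) := by
  refine Summable.of_norm_bounded_eventually_nat
    (Real.summable_nat_rpow.2 (neg_lt_neg hθ)) ?_
  filter_upwards [tendsto_Log_natCast_atTop.eventually hle,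
    tendsto_natCast_atTop_atTop.eventually_ge_atTop (Real.exp 1)] with n hn hn_ge
  have hn_pos : (0 : ℝ) < n := (Real.exp_pos 1).trans_le hn_ge
  rw [Real.norm_of_nonneg (h0 _), Real.rpow_def_of_pos hn_pos, ← Log_of_exp_one_le hn_ge, mul_neg,
    mul_comm]
  exact hn

lemma not_summable_comp_Log_succ_of_frequently_exp_le (hanti : AntitoneOn h (Set.Ici 1))
    (h0 : ∀ t, 0 ≤ h t) {ε : ℝ} (hε : 0 < ε) (hθ : θ < 1)
    (hfreq : ∃ᶠ t in atTop, ε * Real.exp (-(θ * t)) ≤ h t) :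
    ¬ Summable fun n : ℕ => h (Log (n + 1 : ℕ)) := by
  intro hsum
  have hpartial : ∀ t, 1 ≤ t → ⌊Real.exp t⌋₊ * h t ≤ ∑' n : ℕ, h (Log (n + 1 : ℕ)) := by
    intro t ht
    calc ⌊Real.exp t⌋₊ * h t = ∑ _n ∈ Finset.range ⌊Real.exp t⌋₊, h t := by simp
      _ ≤ ∑ n ∈ Finset.range ⌊Real.exp t⌋₊, h (Log (n + 1 : ℕ)) := by
        refine Finset.sum_le_sum fun n hn => hanti (one_le_Log _) ht (Log_le_of_le_exp ht ?_)
        exact (Nat.le_floor_iff (Real.exp_pos t).le).1 (Finset.mem_range.1 hn)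
      _ ≤ _ := hsum.sum_le_tsum _ fun n _ => h0 _
  have hfloor : ∀ t, 1 ≤ t → Real.exp t / 2 ≤ ⌊Real.exp t⌋₊ := by
    intro t ht
    have := Nat.sub_one_lt_floor (Real.exp t)
    linarith [Real.add_one_le_exp t]
  have hgrow : Tendsto (fun t => ε / 2 * Real.exp ((1 - θ) * t)) atTop atTop :=
    (Real.tendsto_exp_atTop.comp (tendsto_id.const_mul_atTop (by linarith))).const_mul_atTop
      (by positivity)
  obtain ⟨t, hlow, ht, hbig⟩ := (hfreq.and_eventually ((eventually_ge_atTop 1).and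
    (hgrow.eventually_gt_atTop (∑' n : ℕ, h (Log (n + 1 : ℕ)))))).exists
  refine lt_irrefl _ (hbig.trans_le ?_)
  calc ε / 2 * Real.exp ((1 - θ) * t) = Real.exp t / 2 * (ε * Real.exp (-(θ * t))) := by
        rw [show (1 - θ) * t = t + -(θ * t) by ring, Real.exp_add]; ring
    _ ≤ ⌊Real.exp t⌋₊ * h t := by
        gcongr
        exact hfloor t ht
    _ ≤ _ := hpartial t ht

end Series

section BorelCantelli

variable {Ω : Type*} [MeasurableSpace Ω] {μ : Measure Ω} {X : ℕ → Ω → ℝ} {a : ℕ → ℝ}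

lemma ae_eventually_le_of_summable [IsFiniteMeasure μ] (hident : ∀ n, IdentDistrib (X n) (X 0) μ μ)
    (hs : Summable fun n => μ.real {ω | X 0 ω > a n}) :
    ∀ᵐ ω ∂μ, ∀ᶠ n in atTop, X n ω ≤ a n := by
  have hmeas_eq : ∀ n, μ {ω | X n ω > a n} = ENNReal.ofReal (μ.real {ω | X 0 ω > a n}) :=
    fun n => by rw [ofReal_measureReal]; exact (hident n).measure_mem_eq measurableSet_Ioi
  have hfin : ∑' n, μ {ω | X n ω > a n} ≠ ∞ := by
    simp_rw [hmeas_eq, ← ENNReal.ofReal_tsum_of_nonneg (fun _ => measureReal_nonneg) hs]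
    exact ENNReal.ofReal_ne_top
  filter_upwards [ae_eventually_notMem hfin] with ω hω
  exact hω.mono fun n hn => not_lt.1 hn

lemma ae_frequently_lt_of_not_summable [IsProbabilityMeasure μ] (hmeas : ∀ n, Measurable (X n))
    (hindep : iIndepFun X μ) (hident : ∀ n, IdentDistrib (X n) (X 0) μ μ)
    (hs : ¬ Summable fun n => μ.real {ω | X 0 ω > a n}) :
    ∀ᵐ ω ∂μ, ∃ᶠ n in atTop, a n < X n ω := by
  set B : ℕ → Set Ω := fun n => X n ⁻¹' Set.Ioi (a n)
  have hB : ∀ n, MeasurableSet (B n) := fun n => hmeas n measurableSet_Ioi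
  have hindepB : iIndepSet B μ := (iIndepSet_iff_meas_biInter hB).2 fun s =>
    hindep.measure_inter_preimage_eq_mul s fun _ _ => measurableSet_Ioi
  have hdiv : ∑' n, μ (B n) = ∞ := by
    refine not_ne_iff.1 fun hfin => hs ((ENNReal.summable_toReal hfin).congr fun n => ?_)
    rw [(hident n).measure_mem_eq measurableSet_Ioi]
    rfl
  have hlimsup : ∀ᵐ ω ∂μ, ω ∈ limsup B atTop :=
    (ae_iff_measure_eq (MeasurableSet.measurableSet_limsup hB).nullMeasurableSet).2
      ((measure_limsup_eq_one hB hindepB hdiv).trans measure_univ.symm)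
  filter_upwards [hlimsup] with ω hω
  exact mem_limsup_iff_frequently_mem.1 hω

end BorelCantelli

section Threshold

variable {Ω : Type*} [MeasurableSpace Ω] {μ : Measure Ω} {X : ℕ → Ω → ℝ} {lam c r : ℝ}

lemma ae_limsup_pmax_div_le [IsFiniteMeasure μ] (hident : ∀ n, IdentDistrib (X n) (X 0) μ μ)
    (hlam : 0 < lam) (hc : 0 < c)
    (hr : Tendsto (fun x => Real.exp (r * x ^ (1 / lam)) * μ.real {ω | X 0 ω > x}) atTop (nhds 0))
    (hθ : 1 < r * c ^ (1 / lam)) :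
    ∀ᵐ ω ∂μ, limsup (fun n : ℕ => ENNReal.ofReal (pmax X n ω / Log n ^ lam)) atTop ≤
      ENNReal.ofReal c := by
  have hs := summable_comp_Log_of_eventually_le_exp (fun _ => measureReal_nonneg) hθ
    (eventually_le_exp_of_tendsto hlam hc hr)
  filter_upwards [ae_eventually_le_of_summable hident hs] with ω hω
  exact limsup_pmax_div_le X ω (monotone_Log_natCast_rpow hlam.le)
    (fun n => Real.rpow_pos_of_pos (Log_pos _) _)
    ((tendsto_rpow_atTop hlam).comp tendsto_Log_natCast_atTop) hc hω

lemma ae_le_limsup_pmax_div [IsProbabilityMeasure μ] (hmeas : ∀ n, Measurable (X n))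
    (hindep : iIndepFun X μ) (hident : ∀ n, IdentDistrib (X n) (X 0) μ μ) (hlam : 0 < lam) (hc : 0 < c)
    (hr : ¬ Tendsto (fun x => Real.exp (r * x ^ (1 / lam)) * μ.real {ω | X 0 ω > x}) atTop
      (nhds 0))
    (hθ : r * c ^ (1 / lam) < 1) :
    ∀ᵐ ω ∂μ, ENNReal.ofReal c ≤
      limsup (fun n : ℕ => ENNReal.ofReal (pmax X n ω / Log n ^ lam)) atTop := by
  obtain ⟨ε, hε, hfreq⟩ :=
    frequently_exp_le_of_not_tendsto hlam hc (fun _ => measureReal_nonneg) hr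
  have hanti : AntitoneOn (fun t => μ.real {ω | X 0 ω > c * t ^ lam}) (Set.Ici 1) :=
    fun s hs t _ hst => measureReal_mono fun ω (hω : c * t ^ lam < X 0 ω) =>
      lt_of_le_of_lt (by gcongr; exact zero_le_one.trans hs) hω
  have hs := not_summable_comp_Log_succ_of_frequently_exp_le hanti (fun _ => measureReal_nonneg)
    hε hθ hfreq
  filter_upwards [ae_frequently_lt_of_not_summable hmeas hindep hident hs] with ω hω
  exact le_limsup_pmax_div X ω (fun n => Real.rpow_pos_of_pos (Log_pos _) _) hω

end Threshold

section Limsup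

variable {Ω : Type*} [MeasurableSpace Ω] {μ : Measure Ω} {L : Ω → ℝ≥0∞} {b : ℝ≥0∞}

lemma ae_le_of_forall_lt_ofReal
    (h : ∀ c : ℝ, 0 < c → b < ENNReal.ofReal c → ∀ᵐ ω ∂μ, L ω ≤ ENNReal.ofReal c) :
    ∀ᵐ ω ∂μ, L ω ≤ b := by
  have hq : ∀ᵐ ω ∂μ, ∀ q : ℚ, 0 < (q : ℝ) → b < ENNReal.ofReal q → L ω ≤ ENNReal.ofReal q :=
    ae_all_iff.2 fun q => eventually_imp_distrib_left.2 fun hq =>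
      eventually_imp_distrib_left.2 (h q hq)
  filter_upwards [hq] with ω hω
  by_contra! hbL
  obtain ⟨q, hq0, hbq, hqL⟩ := ENNReal.lt_iff_exists_rat_btwn.1 hbL
  have hq_pos : 0 < (q : ℝ) := by
    by_contra! hq
    simp [Real.toNNReal_of_nonpos hq] at hbq
  exact (hω q hq_pos hbq).not_gt hqL

lemma ae_le_of_forall_ofReal_lt
    (h : ∀ c : ℝ, 0 < c → ENNReal.ofReal c < b → ∀ᵐ ω ∂μ, ENNReal.ofReal c ≤ L ω) :
    ∀ᵐ ω ∂μ, b ≤ L ω := by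
  have hq : ∀ᵐ ω ∂μ, ∀ q : ℚ, 0 < (q : ℝ) → ENNReal.ofReal q < b → ENNReal.ofReal q ≤ L ω :=
    ae_all_iff.2 fun q => eventually_imp_distrib_left.2 fun hq =>
      eventually_imp_distrib_left.2 (h q hq)
  filter_upwards [hq] with ω hω
  by_contra! hLb
  obtain ⟨q, hq0, hLq, hqb⟩ := ENNReal.lt_iff_exists_rat_btwn.1 hLb
  have hq_pos : 0 < (q : ℝ) := by
    by_contra! hq
    simp [Real.toNNReal_of_nonpos hq] at hLq
  exact (hω q hq_pos hqb).not_gt hLq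

lemma ENNReal.rpow_neg_lt_rpow_neg_iff {x y : ℝ≥0∞} {z : ℝ} (hz : 0 < z) :
    x ^ (-z) < y ^ (-z) ↔ y < x := by
  rw [ENNReal.rpow_neg, ENNReal.rpow_neg, ENNReal.inv_lt_inv, ENNReal.rpow_lt_rpow_iff hz]

lemma ENNReal.ofReal_rpow_neg_one_div_rpow_neg {lam c : ℝ} (hlam : 0 < lam) (hc : 0 < c) :
    ENNReal.ofReal (c ^ (-(1 / lam))) ^ (-lam) = ENNReal.ofReal c := by
  rw [ENNReal.ofReal_rpow_of_pos (Real.rpow_pos_of_pos hc _), ← Real.rpow_mul hc.le,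
    neg_mul_neg, one_div_mul_cancel hlam.ne', Real.rpow_one]

end Limsup

theorem stmt17 {Ω : Type*} [MeasurableSpace Ω] (μ : Measure Ω) [IsProbabilityMeasure μ]
    (X : ℕ → Ω → ℝ) (hmeas : ∀ n, Measurable (X n))
    (hindep : iIndepFun X μ)
    (hident : ∀ n, IdentDistrib (X n) (X 0) μ μ)
    (lam : ℝ) (hlam : 0 < lam) (β₁ : ℝ≥0∞)
    (hβ₁ : β₁ = sSup (ENNReal.ofReal '' {r : ℝ | 0 ≤ r ∧
        Tendsto (fun x : ℝ => Real.exp (r * x ^ (1 / lam)) * (μ {ω | X 0 ω > x}).toReal)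
          atTop (nhds 0)})) :
    ∀ᵐ ω ∂μ,
      Filter.limsup (fun n : ℕ => ENNReal.ofReal (pmax X n ω / Log n ^ lam)) atTop =
        β₁ ^ (-lam) := by
  have hupper : ∀ᵐ ω ∂μ, limsup (fun n : ℕ => ENNReal.ofReal (pmax X n ω / Log n ^ lam)) atTop ≤
      β₁ ^ (-lam) := by
    refine ae_le_of_forall_lt_ofReal fun c hc hcβ => ?_
    rw [← ENNReal.ofReal_rpow_neg_one_div_rpow_neg hlam hc, ENNReal.rpow_neg_lt_rpow_neg_iff hlam,
      hβ₁, lt_sSup_iff] at hcβ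
    obtain ⟨_, ⟨r, ⟨hr0, hr⟩, rfl⟩, hcr⟩ := hcβ
    exact ae_limsup_pmax_div_le hident hlam hc hr
      ((one_lt_mul_rpow_iff hc).2 ((ENNReal.ofReal_lt_ofReal_iff_of_nonneg (by positivity)).1 hcr))
  have hlower : ∀ᵐ ω ∂μ, β₁ ^ (-lam) ≤
      limsup (fun n : ℕ => ENNReal.ofReal (pmax X n ω / Log n ^ lam)) atTop := by
    refine ae_le_of_forall_ofReal_lt fun c hc hcβ => ?_
    rw [← ENNReal.ofReal_rpow_neg_one_div_rpow_neg hlam hc,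
      ENNReal.rpow_neg_lt_rpow_neg_iff hlam] at hcβ
    obtain ⟨r, hr0, hβr, hrc⟩ := ENNReal.lt_iff_exists_real_btwn.1 hcβ
    have hr : ¬ Tendsto (fun x => Real.exp (r * x ^ (1 / lam)) * μ.real {ω | X 0 ω > x}) atTop
        (nhds 0) := fun hT => hβr.not_ge (hβ₁ ▸ le_sSup ⟨r, ⟨hr0, hT⟩, rfl⟩)
    exact ae_le_limsup_pmax_div hmeas hindep hident hlam hc hr
      ((mul_rpow_lt_one_iff hc).2 ((ENNReal.ofReal_lt_ofReal_iff_of_nonneg hr0).1 hrc))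
  filter_upwards [hupper, hlower] with ω hle hge
  exact le_antisymm hle hge
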